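/- Fix g > 0 and let g_c = inf{ z > √(1+g²) : there exists Σ > Σ_z with f_z(Σ) = 0 }. Then: (a) the set { z > √(1+g²) : f_z(Σ_z) < 0 } equals the open interval (g_c, ∞); (b) f_{g_c}(Σ_{g_c}) = 0; and (c) g_c > √(1 + g²). -/

import Mathlib

/-!
At Σ = Σ_z one has e^{(g+z)Σ} = 4/Σ², so f_z(Σ_z) = (2/Σ_z + g)² − z², which is
negative iff Σ_z > 2/(z − g). Since S ↦ S − 2e^{−(g+z)S/2} is increasing and vanishes at Σ_z,
this happens iff ψ(z) = log(z − g) − (g+z)/(z − g) > 0; ψ is strictly increasing on (g, ∞) with a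
single root z* > g + 1 > √(1+g²). As f_z is increasing in Σ and unbounded, a root Σ > Σ_z exists
iff f_z(Σ_z) < 0, so g_c = z*, and at z* the identity Σ_{z*} = 2/(z* − g) gives f = 0.
-/

/-- The critical total concentration Σ_z: the unique positive solution of
Σ = 2·e^{−(g+z)Σ/2} (equivalently Σ² = 4·e^{−(g+z)Σ}). -/
noncomputable def sigmaZ (g z : ℝ) : ℝ :=
  sInf {S : ℝ | 0 < S ∧ S = 2 * Real.exp (-((g + z) * S) / 2)}

/-- f_z(Σ) = (1 + gΣ)·e^{(g+z)Σ} + g² − z². -/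
noncomputable def fz (g z S : ℝ) : ℝ :=
  (1 + g * S) * Real.exp ((g + z) * S) + g ^ 2 - z ^ 2

/-- g_c = inf { z > √(1+g²) : ∃ Σ > Σ_z with f_z(Σ) = 0 }. -/
noncomputable def gcConst (g : ℝ) : ℝ :=
  sInf {z : ℝ | Real.sqrt (1 + g ^ 2) < z ∧ ∃ S : ℝ, sigmaZ g z < S ∧ fz g z S = 0}

open Real Set

lemma strictMono_sub_two_mul_exp {c : ℝ} (hc : 0 < c) :
    StrictMono fun S : ℝ => S - 2 * exp (-(c * S) / 2) := by
  intro a b hab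
  have : exp (-(c * b) / 2) < exp (-(c * a) / 2) := exp_lt_exp.mpr (by nlinarith)
  dsimp only
  linarith

lemma exists_eq_two_mul_exp {c : ℝ} (hc : 0 < c) : ∃ S : ℝ, S = 2 * exp (-(c * S) / 2) := by
  have hcont : Continuous fun S : ℝ => S - 2 * exp (-(c * S) / 2) := by fun_prop
  have h0 : 0 - 2 * exp (-(c * 0) / 2) ≤ 0 := by simp
  have h2 : 0 ≤ 2 - 2 * exp (-(c * 2) / 2) := by
    have : exp (-(c * 2) / 2) ≤ 1 := exp_le_one_iff.mpr (by linarith)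
    linarith
  obtain ⟨S, -, hS⟩ := intermediate_value_Icc zero_le_two hcont.continuousOn ⟨h0, h2⟩
  exact ⟨S, sub_eq_zero.mp hS⟩

section sigmaZ

variable {g z : ℝ}

lemma sigmaZ_eq_of_eq (hc : 0 < g + z) {S : ℝ} (hS : S = 2 * exp (-((g + z) * S) / 2)) :
    sigmaZ g z = S := by
  have hset : {S' : ℝ | 0 < S' ∧ S' = 2 * exp (-((g + z) * S') / 2)} = {S} := by
    ext S'
    refine ⟨fun ⟨_, hS'⟩ => (strictMono_sub_two_mul_exp hc).injective ?_, ?_⟩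
    · linarith
    · rintro rfl
      exact ⟨hS ▸ by positivity, hS⟩
  rw [sigmaZ, hset, csInf_singleton]

lemma sigmaZ_eq (hc : 0 < g + z) : sigmaZ g z = 2 * exp (-((g + z) * sigmaZ g z) / 2) := by
  obtain ⟨S, hS⟩ := exists_eq_two_mul_exp hc
  rwa [sigmaZ_eq_of_eq hc hS]

lemma sigmaZ_pos (hc : 0 < g + z) : 0 < sigmaZ g z := by
  rw [sigmaZ_eq hc]
  positivity

lemma lt_sigmaZ_iff (hc : 0 < g + z) {S : ℝ} :
    S < sigmaZ g z ↔ S < 2 * exp (-((g + z) * S) / 2) := by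
  rw [← (strictMono_sub_two_mul_exp hc).lt_iff_lt, ← sigmaZ_eq hc, sub_self, sub_neg]

lemma fz_sigmaZ (hc : 0 < g + z) : fz g z (sigmaZ g z) = (2 / sigmaZ g z + g) ^ 2 - z ^ 2 := by
  set S := sigmaZ g z
  have hS : S ≠ 0 := (sigmaZ_pos hc).ne'
  have hexp : exp ((g + z) * S) * S ^ 2 = 4 := by
    have : exp ((g + z) * S) * exp (-((g + z) * S) / 2) ^ 2 = 1 := by
      rw [← exp_nat_mul, ← exp_add]
      ring_nf
      exact exp_zero
    rw [show exp (-((g + z) * S) / 2) = S / 2 by linarith [sigmaZ_eq hc]] at this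
    linarith
  rw [fz, show exp ((g + z) * S) = 4 / S ^ 2 by field_simp; linarith]
  field_simp
  ring

end sigmaZ

noncomputable def psiF (g z : ℝ) : ℝ := log (z - g) - (g + z) / (z - g)

section psiF

variable {g z : ℝ}

lemma two_mul_exp_at_two_div (hgz : g < z) :
    2 * exp (-((g + z) * (2 / (z - g))) / 2) = 2 / (z - g) * exp (psiF g z) := by
  have hzg : 0 < z - g := sub_pos.mpr hgz
  rw [psiF, exp_sub, exp_log hzg, show -((g + z) * (2 / (z - g))) / 2 = -((g + z) / (z - g)) by
    field_simp, exp_neg]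
  field_simp

lemma two_div_lt_sigmaZ_iff (hg : 0 ≤ g) (hgz : g < z) :
    2 / (z - g) < sigmaZ g z ↔ 0 < psiF g z := by
  have h2 : 0 < 2 / (z - g) := div_pos two_pos (sub_pos.mpr hgz)
  rw [lt_sigmaZ_iff (by linarith), two_mul_exp_at_two_div hgz, lt_mul_iff_one_lt_right h2,
    one_lt_exp_iff]

lemma sigmaZ_eq_two_div_of_psiF_eq_zero (hg : 0 ≤ g) (hgz : g < z) (hψ : psiF g z = 0) :
    sigmaZ g z = 2 / (z - g) :=
  sigmaZ_eq_of_eq (by linarith) (by rw [two_mul_exp_at_two_div hgz, hψ, exp_zero, mul_one])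

lemma fz_sigmaZ_neg_iff (hg : 0 ≤ g) (hz : 0 < z) :
    fz g z (sigmaZ g z) < 0 ↔ g < z ∧ 0 < psiF g z := by
  have hc : 0 < g + z := by linarith
  have hS := sigmaZ_pos hc
  rw [fz_sigmaZ hc, sub_neg, pow_lt_pow_iff_left₀ (by positivity) hz.le two_ne_zero]
  constructor
  · intro h
    have hgz : g < z := by linarith [div_pos two_pos hS]
    refine ⟨hgz, (two_div_lt_sigmaZ_iff hg hgz).mp ?_⟩
    rw [div_lt_comm₀ (sub_pos.mpr hgz) hS]
    linarith
  · rintro ⟨hgz, hψ⟩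
    have := (div_lt_comm₀ (sub_pos.mpr hgz) hS).mp ((two_div_lt_sigmaZ_iff hg hgz).mpr hψ)
    linarith

lemma psiF_strictMonoOn (hg : 0 ≤ g) : StrictMonoOn (psiF g) (Ioi g) := by
  intro a (ha : g < a) b (hb : g < b) hab
  have ha' : 0 < a - g := sub_pos.mpr ha
  have hb' : 0 < b - g := sub_pos.mpr hb
  have hlog : log (a - g) < log (b - g) := log_lt_log ha' (by linarith)
  have hfrac : (g + b) / (b - g) ≤ (g + a) / (a - g) := by
    rw [div_le_div_iff₀ hb' ha']
    nlinarith
  simp only [psiF]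
  linarith

lemma exists_psiF_root (hg : 0 ≤ g) :
    ∃ zs, g + 1 < zs ∧ psiF g zs = 0 ∧ ∀ z, g < z → (0 < psiF g z ↔ zs < z) := by
  set E := exp (2 * g + 2)
  have hE : 1 < E := one_lt_exp_iff.mpr (by linarith)
  have hcont : ContinuousOn (psiF g) (Icc (g + 1) (g + E)) := by
    refine ContinuousOn.sub (ContinuousOn.log (by fun_prop) ?_) (ContinuousOn.div (by fun_prop)
      (by fun_prop) ?_) <;>
    · intro x hx
      linarith [hx.1]
  have hleft : psiF g (g + 1) < 0 := by
    simp only [psiF, add_sub_cancel_left, log_one, div_one]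
    linarith
  have hright : 0 < psiF g (g + E) := by
    rw [psiF, add_sub_cancel_left, log_exp, sub_pos, div_lt_iff₀ (by linarith)]
    nlinarith
  obtain ⟨zs, ⟨hzs1, -⟩, hzs⟩ :=
    intermediate_value_Icc (by linarith) hcont ⟨hleft.le, hright.le⟩
  have hzs1 : g + 1 < zs := lt_of_le_of_ne hzs1 (by rintro rfl; linarith)
  refine ⟨zs, hzs1, hzs, fun z hz => ?_⟩
  rw [← hzs, (psiF_strictMonoOn hg).lt_iff_lt (show g < zs by linarith) hz]

end psiF

section fz

variable {g z : ℝ}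

lemma fz_strictMonoOn (hg : 0 ≤ g) (hc : 0 < g + z) : StrictMonoOn (fz g z) (Ici 0) := by
  intro a (ha : 0 ≤ a) b _ hab
  have hexp : exp ((g + z) * a) < exp ((g + z) * b) := exp_lt_exp.mpr (by nlinarith)
  have hlin : 1 + g * a ≤ 1 + g * b := by nlinarith
  have := mul_lt_mul' hlin hexp (exp_pos _).le (by nlinarith)
  simp only [fz]
  linarith

lemma fz_pos_of_le (hg : 0 ≤ g) (hz : 0 ≤ z) {S : ℝ} (hS : z ≤ S) : 0 < fz g z S := by
  have hexp : (g + z) * S + 1 ≤ exp ((g + z) * S) := add_one_le_exp _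
  have hgS : 0 ≤ g * S := mul_nonneg hg (hz.trans hS)
  have hzS : z * z ≤ (g + z) * S := by nlinarith
  simp only [fz]
  nlinarith

lemma exists_gt_sigmaZ_fz_eq_zero_iff (hg : 0 ≤ g) (hz : 0 < z) :
    (∃ S, sigmaZ g z < S ∧ fz g z S = 0) ↔ fz g z (sigmaZ g z) < 0 := by
  have hc : 0 < g + z := by linarith
  have hS := sigmaZ_pos hc
  constructor
  · rintro ⟨S, hlt, hS0⟩
    rw [← hS0]
    exact fz_strictMonoOn hg hc hS.le (hS.le.trans hlt.le) hlt
  · intro hneg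
    have hcont : ContinuousOn (fz g z) (Icc (sigmaZ g z) (sigmaZ g z + z)) := by
      unfold fz
      fun_prop
    obtain ⟨S, ⟨hle, -⟩, hS0⟩ := intermediate_value_Icc (by linarith) hcont
      ⟨hneg.le, (fz_pos_of_le hg hz.le (by linarith)).le⟩
    exact ⟨S, lt_of_le_of_ne hle (by rintro rfl; linarith), hS0⟩

end fz

lemma sqrt_one_add_sq_lt {g : ℝ} (hg : 0 < g) : √(1 + g ^ 2) < g + 1 := by
  rw [sqrt_lt' (by linarith)]
  nlinarith

/-- Remark: (a) { z > √(1+g²) : f_z(Σ_z) < 0 } = (g_c, ∞);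
(b) f_{g_c}(Σ_{g_c}) = 0; (c) g_c > √(1+g²). -/
theorem stmt_11 (g : ℝ) (hg : 0 < g) :
    {z : ℝ | Real.sqrt (1 + g ^ 2) < z ∧ fz g z (sigmaZ g z) < 0} = Set.Ioi (gcConst g) ∧
    fz g (gcConst g) (sigmaZ g (gcConst g)) = 0 ∧
    Real.sqrt (1 + g ^ 2) < gcConst g := by
  obtain ⟨zs, hzs, hψ, hsign⟩ := exists_psiF_root hg.le
  have hsqrt := sqrt_one_add_sq_lt hg
  have hzpos : ∀ {z}, √(1 + g ^ 2) < z → 0 < z := fun h => (sqrt_nonneg _).trans_lt h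
  have hneg : {z | √(1 + g ^ 2) < z ∧ fz g z (sigmaZ g z) < 0} = Ioi zs := by
    ext z
    rw [mem_Ioi]
    refine ⟨fun ⟨hz, hf⟩ => ?_, fun h => ?_⟩
    · obtain ⟨hgz, hpos⟩ := (fz_sigmaZ_neg_iff hg.le (hzpos hz)).mp hf
      exact (hsign z hgz).mp hpos
    · have hz : √(1 + g ^ 2) < z := by linarith
      have hgz : g < z := by linarith
      exact ⟨hz, (fz_sigmaZ_neg_iff hg.le (hzpos hz)).mpr ⟨hgz, (hsign z hgz).mpr h⟩⟩
  have hgc : gcConst g = zs := by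
    rw [gcConst, ← csInf_Ioi (a := zs), ← hneg]
    congr 1
    ext z
    exact and_congr_right fun hz => exists_gt_sigmaZ_fz_eq_zero_iff hg.le (hzpos hz)
  refine ⟨hgc ▸ hneg, ?_, by linarith⟩
  rw [hgc, fz_sigmaZ (by linarith), sigmaZ_eq_two_div_of_psiF_eq_zero hg.le (by linarith) hψ,
    div_div_cancel₀ two_ne_zero]
  ring
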